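/- Let d = 1 and define T: L²(ℝ) ∩ L^∞(ℝ) → L²(ℝ) ∩ L^∞(ℝ) by Tf := (∫₀¹ f(t) dt)·χ_{[0,1]}. Then (i) ∥Tf∥₂ ≤ ∥f∥₂ and ∥Tf∥_∞ ≤ ∥f∥_∞ for every f ∈ 𝒜; yet (ii) for every λ ∈ (0, 1/2) and every c > 0, taking f₁ := λχ_{[0,1/2]} and f₂ := λχ_{[0,1]} (so that Tf₁ = (λ/2)χ_{[0,1]} and Tf₂ = λχ_{[0,1]}), the 2×2 matrix A − B, where A := (K(f_i,f_j))_{ij} = [[(1−4λ²)^{−c/4}, (1−4λ²)^{−c/4}], [(1−4λ²)^{−c/4}, (1−4λ²)^{−c/2}]] and B := (K(Tf_i,Tf_j))_{ij} = [[(1−λ²)^{−c/2}, (1−2λ²)^{−c/2}], [(1−2λ²)^{−c/2}, (1−4λ²)^{−c/2}]], satisfies det(A − B) ≤ 0 and A − B is not positive semidefinite. (Hence, although T is a contraction on both L² and L^∞, its quadratic second quantization Γ₂(T) is not a contraction.) -/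

import Mathlib

/-!
For indicator functions the integrand `log (1 - 4 conj f g)` is again a constant times an
indicator, so `K(a χ_[0,p], b χ_[0,q]) = (1 - 4ab) ^ (-c min(p,q) / 2)` and all eight entries
of `A` and `B` are explicit. The symmetric matrix `A - B` then has a vanishing bottom-right
entry and a nonzero off-diagonal entry `q`, since `(1 - 2λ²)² > 1 - 4λ²`; hence
`det (A - B) = -q² < 0`, which excludes positive semidefiniteness. The contraction bounds for `T` come from
`|∫₀¹ f| ≤ ‖f‖_{L¹[0,1]} ≤ ‖f‖_{L^p[0,1]}` on the probability space `[0,1]`.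
-/

open MeasureTheory Complex Finset
open scoped Nat ENNReal

noncomputable section

/-- Membership in `𝒜 = L²(ℝ) ∩ L^∞(ℝ)`. -/
def MemA1 (f : ℝ → ℂ) : Prop :=
  MemLp f 2 (volume : Measure ℝ) ∧ MemLp f ⊤ (volume : Measure ℝ)

/-- `K(f,g) = ⟨Ψ(f),Ψ(g)⟩`, the inner product of quadratic exponential vectors (d = 1). -/
def Kker1 (c : ℝ) (f g : ℝ → ℂ) : ℂ :=
  Complex.exp (-(c / 2 : ℂ) *
    ∫ x : ℝ, Complex.log (1 - 4 * (starRingEnd ℂ) (f x) * g x))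

lemma intervalIntegral_zero_one_mul_indicator_Icc (a : ℂ) {p : ℝ} (hp₀ : 0 ≤ p)
    (hp₁ : p ≤ 1) :
    ∫ t in (0:ℝ)..1, a * Set.indicator (Set.Icc 0 p) (fun _ => (1:ℂ)) t = a * p := by
  have hset : Set.Icc 0 p ∩ Set.Ioc 0 1 = Set.Ioc (0:ℝ) p := by
    ext x
    simp only [Set.mem_inter_iff, Set.mem_Icc, Set.mem_Ioc]
    exact ⟨fun h => ⟨h.2.1, h.1.2⟩, fun h => ⟨⟨h.1.le, h.2⟩, h.1, h.2.trans hp₁⟩⟩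
  rw [intervalIntegral.integral_of_le zero_le_one, integral_const_mul,
    integral_indicator_const _ measurableSet_Icc, measureReal_restrict_apply measurableSet_Icc,
    hset, Real.volume_real_Ioc_of_le hp₀, sub_zero, real_smul, mul_one]

lemma eLpNorm_intervalIntegral_mul_indicator_le {f : ℝ → ℂ}
    (hf : AEStronglyMeasurable f volume) {p : ℝ≥0∞} (hp : 1 ≤ p) :
    eLpNorm (fun x =>
        (∫ t in (0:ℝ)..1, f t) * Set.indicator (Set.Icc (0:ℝ) 1) (fun _ => (1:ℂ)) x)
      p volume ≤ eLpNorm f p volume := by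
  let μ := volume.restrict (Set.Ioc (0:ℝ) 1)
  have : IsProbabilityMeasure μ := ⟨by simp [μ]⟩
  set I := ∫ t in (0:ℝ)..1, f t
  have hI : (fun x => I * Set.indicator (Set.Icc (0:ℝ) 1) (fun _ => (1:ℂ)) x)
      = Set.indicator (Set.Icc (0:ℝ) 1) (fun _ => I) := by
    ext x
    simp [Set.indicator_apply]
  rw [hI, eLpNorm_indicator_const' measurableSet_Icc (by simp) (by positivity), Real.volume_Icc,
    sub_zero, ENNReal.ofReal_one, ENNReal.one_rpow, mul_one]
  calc ‖I‖ₑ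
      ≤ ∫⁻ t, ‖f t‖ₑ ∂μ := by
        rw [show I = ∫ t in Set.Ioc 0 1, f t from intervalIntegral.integral_of_le zero_le_one]
        exact enorm_integral_le_lintegral_enorm _
    _ = eLpNorm f 1 μ := eLpNorm_one_eq_lintegral_enorm.symm
    _ ≤ eLpNorm f p μ := eLpNorm_le_eLpNorm_of_exponent_le hp hf.restrict
    _ ≤ eLpNorm f p volume := eLpNorm_mono_measure f Measure.restrict_le_self

lemma log_one_sub_mul_indicator (S S' : Set ℝ) (a b x : ℝ) :
    Complex.log (1 - 4 * (starRingEnd ℂ) ((a : ℂ) * Set.indicator S (fun _ => (1 : ℂ)) x) *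
      ((b : ℂ) * Set.indicator S' (fun _ => (1 : ℂ)) x))
      = Set.indicator (S ∩ S') (fun _ => Complex.log (1 - 4 * a * b)) x := by
  by_cases hx : x ∈ S <;> by_cases hx' : x ∈ S' <;> simp [hx, hx', mul_comm]

lemma Kker1_mul_indicator (c a b : ℝ) {S S' : Set ℝ} (hS : MeasurableSet (S ∩ S'))
    (hab : 4 * a * b < 1) :
    Kker1 c (fun x => (a : ℂ) * Set.indicator S (fun _ => (1 : ℂ)) x)
        (fun x => (b : ℂ) * Set.indicator S' (fun _ => (1 : ℂ)) x)
      = (((1 - 4 * a * b) ^ (-(c / 2) * volume.real (S ∩ S')) : ℝ) : ℂ) := by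
  have hpos : 0 < 1 - 4 * a * b := by linarith
  simp_rw [Kker1, log_one_sub_mul_indicator, integral_indicator_const _ hS, real_smul]
  rw [Real.rpow_def_of_pos hpos, Complex.ofReal_exp, Complex.ofReal_mul,
    Complex.ofReal_log hpos.le]
  push_cast
  ring_nf

lemma Kker1_mul_indicator_Icc (c a b : ℝ) {p q : ℝ} (hp : 0 ≤ p) (hq : 0 ≤ q)
    (hab : 4 * a * b < 1) :
    Kker1 c (fun x => (a : ℂ) * Set.indicator (Set.Icc 0 p) (fun _ => (1 : ℂ)) x)
        (fun x => (b : ℂ) * Set.indicator (Set.Icc 0 q) (fun _ => (1 : ℂ)) x)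
      = (((1 - 4 * a * b) ^ (-(c / 2) * min p q) : ℝ) : ℂ) := by
  rw [Kker1_mul_indicator c a b (measurableSet_Icc.inter measurableSet_Icc) hab,
    Set.Icc_inter_Icc, max_self, Real.volume_real_Icc_of_le (le_min hp hq), sub_zero]

lemma one_sub_two_mul_rpow_lt {x c : ℝ} (hx₀ : 0 < x) (hx : 4 * x < 1) (hc : 0 < c) :
    (1 - 2 * x) ^ (-(c / 2)) < (1 - 4 * x) ^ (-(c / 4)) := by
  have hsq : (1 - 2 * x) ^ (-(c / 2)) = ((1 - 2 * x) ^ 2) ^ (-(c / 4)) := by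
    rw [← Real.rpow_natCast_mul (by linarith)]
    ring_nf
  rw [hsq]
  exact Real.rpow_lt_rpow_of_neg (by linarith) (by nlinarith) (by linarith)

lemma Matrix.det_fin_two_neg_of_apply_one_one_eq_zero {M : Matrix (Fin 2) (Fin 2) ℝ}
    (h10 : M 1 0 = M 0 1) (h11 : M 1 1 = 0) (h01 : M 0 1 ≠ 0) : M.det < 0 := by
  rw [Matrix.det_fin_two, h10, h11, mul_zero, zero_sub, neg_neg_iff_pos]
  exact mul_self_pos.2 h01

/-- the counterexample of the paper: `Tf := (∫₀¹ f)·χ_{[0,1]}` is a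
contraction of both `L²(ℝ)` and `L^∞(ℝ)`, yet with `f₁ = λχ_{[0,1/2]}`, `f₂ = λχ_{[0,1]}`
(`0 < λ < 1/2`) one has `Tf₁ = (λ/2)χ_{[0,1]}`, `Tf₂ = λχ_{[0,1]}`, the Gram matrices
`A = (K(f_i,f_j))`, `B = (K(Tf_i,Tf_j))` are the explicit matrices below, and
`det(A − B) ≤ 0` with `A − B` not positive semidefinite: `Γ₂(T)` is not a contraction. -/
theorem statement19 (c : ℝ) (hc : 0 < c)
    (lam : ℝ) (hlam0 : 0 < lam) (hlam : lam < 1 / 2)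
    (T : (ℝ → ℂ) → (ℝ → ℂ))
    (hT : T = fun f x =>
      (∫ t in (0:ℝ)..1, f t) * Set.indicator (Set.Icc (0:ℝ) 1) (fun _ => (1:ℂ)) x)
    (f₁ f₂ : ℝ → ℂ)
    (hf₁ : f₁ = fun x => (lam : ℂ) * Set.indicator (Set.Icc (0:ℝ) (1/2)) (fun _ => (1:ℂ)) x)
    (hf₂ : f₂ = fun x => (lam : ℂ) * Set.indicator (Set.Icc (0:ℝ) 1) (fun _ => (1:ℂ)) x)
    (A B : Matrix (Fin 2) (Fin 2) ℝ)
    (hA : A = !![(1 - 4 * lam ^ 2) ^ (-(c / 4)), (1 - 4 * lam ^ 2) ^ (-(c / 4));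
                 (1 - 4 * lam ^ 2) ^ (-(c / 4)), (1 - 4 * lam ^ 2) ^ (-(c / 2))])
    (hB : B = !![(1 - lam ^ 2) ^ (-(c / 2)), (1 - 2 * lam ^ 2) ^ (-(c / 2));
                 (1 - 2 * lam ^ 2) ^ (-(c / 2)), (1 - 4 * lam ^ 2) ^ (-(c / 2))]) :
    (∀ f, MemA1 f →
      eLpNorm (T f) 2 (volume : Measure ℝ) ≤ eLpNorm f 2 (volume : Measure ℝ) ∧
      eLpNorm (T f) ⊤ (volume : Measure ℝ) ≤ eLpNorm f ⊤ (volume : Measure ℝ)) ∧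
    (T f₁ = fun x => ((lam : ℂ) / 2) * Set.indicator (Set.Icc (0:ℝ) 1) (fun _ => (1:ℂ)) x) ∧
    (T f₂ = fun x => (lam : ℂ) * Set.indicator (Set.Icc (0:ℝ) 1) (fun _ => (1:ℂ)) x) ∧
    (Kker1 c f₁ f₁ = (A 0 0 : ℝ) ∧ Kker1 c f₁ f₂ = (A 0 1 : ℝ) ∧
      Kker1 c f₂ f₁ = (A 1 0 : ℝ) ∧ Kker1 c f₂ f₂ = (A 1 1 : ℝ)) ∧
    (Kker1 c (T f₁) (T f₁) = (B 0 0 : ℝ) ∧ Kker1 c (T f₁) (T f₂) = (B 0 1 : ℝ) ∧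
      Kker1 c (T f₂) (T f₁) = (B 1 0 : ℝ) ∧ Kker1 c (T f₂) (T f₂) = (B 1 1 : ℝ)) ∧
    (A - B).det ≤ 0 ∧ ¬ (A - B).PosSemidef := by
  have hl : 4 * lam ^ 2 < 1 := by nlinarith
  have hT₁ : T f₁ = fun x =>
      ((lam / 2 : ℝ) : ℂ) * Set.indicator (Set.Icc (0:ℝ) 1) (fun _ => (1:ℂ)) x := by
    simp only [hT, hf₁]
    rw [intervalIntegral_zero_one_mul_indicator_Icc _ (by norm_num) (by norm_num)]
    push_cast
    ring_nf
  have hT₂ : T f₂ = f₂ := by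
    simp only [hT, hf₂]
    rw [intervalIntegral_zero_one_mul_indicator_Icc _ zero_le_one le_rfl, Complex.ofReal_one,
      mul_one]
  have hdet : (A - B).det < 0 :=
    Matrix.det_fin_two_neg_of_apply_one_one_eq_zero (by simp [hA, hB]) (by simp [hA, hB])
      (by simpa [hA, hB, sub_eq_zero] using (one_sub_two_mul_rpow_lt (pow_pos hlam0 2) hl hc).ne')
  refine ⟨fun f hf => hT ▸ ⟨eLpNorm_intervalIntegral_mul_indicator_le hf.1.1 one_le_two,
    eLpNorm_intervalIntegral_mul_indicator_le hf.1.1 le_top⟩, by rw [hT₁]; push_cast; rfl,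
    hT₂.trans hf₂, ?_, ?_, hdet.le, fun h => h.det_nonneg.not_gt hdet⟩
  · simp only [hf₁, hf₂, hA, Matrix.of_apply, Matrix.cons_val', Matrix.cons_val_zero,
      Matrix.cons_val_one, Matrix.cons_val_fin_one]
    refine ⟨?_, ?_, ?_, ?_⟩ <;>
      rw [Kker1_mul_indicator_Icc c _ _ (by norm_num) (by norm_num) (by nlinarith)] <;>
      norm_num <;> ring_nf
  · rw [hT₁, hT₂, hf₂]
    simp only [hB, Matrix.of_apply, Matrix.cons_val', Matrix.cons_val_zero,
      Matrix.cons_val_one, Matrix.cons_val_fin_one]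
    refine ⟨?_, ?_, ?_, ?_⟩ <;>
      rw [Kker1_mul_indicator_Icc c _ _ (by norm_num) (by norm_num) (by nlinarith)] <;>
      norm_num <;> ring_nf
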